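/- In the space ℝ³ with norm whose unit ball is B = conv((B²₂ × {0}) ∪ {(0,0,±1)}), the equilateral dimension is at least 4: the four points 0 and the vertices of T* = (1/√3)·T + (0,0,(√3-1)/√3) (T the Euclidean equilateral triangle with vertices (±√3/2,-1/2,0), (0,1,0)) are pairwise at distance exactly 1. -/

import Mathlib

/-!
A linear functional that is at most `1` on a set and equals `1` at one of its points certifies
that this point has gauge `1`. For the double cone, `x ↦ a x₀ + b x₁ - x₂` with `a² + b² = 1`
is such a functional: it is at most `1` on the disk by Cauchy–Schwarz and at the two apexes, and
it equals `1` on the whole segment from `(a, b, 0)` to the apex `(0, 0, -1)`. Each `-w_i` lies on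
such a segment, namely `(1/√3)(-v_i) + (1 - 1/√3)(0, 0, -1)`, and since `T` has side `√3`, each
`w_i - w_j` is a horizontal unit vector.
-/

open Set

def diskSet : Set (Fin 3 → ℝ) := {p | p 0 ^ 2 + p 1 ^ 2 ≤ 1 ∧ p 2 = 0}

def Bcone : Set (Fin 3 → ℝ) :=
  convexHull ℝ (diskSet ∪ ({![0, 0, 1], ![0, 0, -1]} : Set (Fin 3 → ℝ)))

noncomputable def vT : Fin 3 → (Fin 3 → ℝ) :=
  ![![Real.sqrt 3 / 2, -(1 / 2 : ℝ), 0], ![-(Real.sqrt 3 / 2), -(1 / 2 : ℝ), 0], ![0, 1, 0]]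

noncomputable def wT : Fin 3 → (Fin 3 → ℝ) :=
  fun i => (1 / Real.sqrt 3) • vT i + ![0, 0, (Real.sqrt 3 - 1) / Real.sqrt 3]

theorem gauge_eq_one_of_mem_of_supporting {E : Type*} [AddCommGroup E] [Module ℝ E] {s : Set E}
    (f : E →ₗ[ℝ] ℝ) (hf : ∀ y ∈ s, f y ≤ 1) {x : E} (hx : x ∈ s) (hfx : f x = 1) :
    gauge s x = 1 := by
  refine le_antisymm (gauge_le_one_of_mem hx) (le_csInf ⟨1, one_pos, x, hx, one_smul ℝ x⟩ ?_)
  rintro r ⟨hr, y, hy, rfl⟩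
  calc 1 = f (r • y) := hfx.symm
    _ = r * f y := by simp
    _ ≤ r := mul_le_of_le_one_right hr.le (hf y hy)

theorem dotProduct_le_one_of_mem_Bcone {a b c : ℝ} (hab : a ^ 2 + b ^ 2 ≤ 1) (hc : |c| ≤ 1)
    {x : Fin 3 → ℝ} (hx : x ∈ Bcone) : ![a, b, c] ⬝ᵥ x ≤ 1 := by
  refine convexHull_min ?_ (convex_halfSpace_le (dotProductBilin ℝ ℝ ![a, b, c]).isLinear 1) hx
  rintro y (⟨hy, hy₂⟩ | rfl | rfl)
  · have hCS : a * y 0 + b * y 1 ≤ 1 := by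
      nlinarith [sq_nonneg (a * y 1 - b * y 0), sq_nonneg (a * y 0 + b * y 1 - 1)]
    simpa [dotProduct, Fin.sum_univ_three, hy₂] using hCS
  all_goals
    simp [dotProduct, Fin.sum_univ_three]
    linarith [abs_le.1 hc]

theorem lateral_mem_Bcone {a b t : ℝ} (hab : a ^ 2 + b ^ 2 ≤ 1) (ht₀ : 0 ≤ t) (ht₁ : t ≤ 1) :
    ![t * a, t * b, t - 1] ∈ Bcone := by
  have hdisk : ![a, b, 0] ∈ Bcone := subset_convexHull ℝ _ (Or.inl ⟨by simpa using hab, rfl⟩)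
  have hapex : ![0, 0, -1] ∈ Bcone := subset_convexHull ℝ _ (Or.inr (by simp))
  have hcomb : ![t * a, t * b, t - 1] = t • ![a, b, 0] + (1 - t) • ![0, 0, -1] := by
    ext k
    fin_cases k <;> simp
  rw [hcomb]
  exact convex_convexHull ℝ _ hdisk hapex ht₀ (sub_nonneg.2 ht₁) (add_sub_cancel t 1)

theorem gauge_Bcone_lateral {a b t : ℝ} (hab : a ^ 2 + b ^ 2 = 1) (ht₀ : 0 ≤ t) (ht₁ : t ≤ 1) :
    gauge Bcone ![t * a, t * b, t - 1] = 1 := by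
  refine gauge_eq_one_of_mem_of_supporting (dotProductBilin ℝ ℝ ![a, b, -1])
    (fun y hy => dotProduct_le_one_of_mem_Bcone hab.le (by simp) hy)
    (lateral_mem_Bcone hab.le ht₀ ht₁) ?_
  simp [dotProduct, Fin.sum_univ_three]
  linear_combination t * hab

theorem gauge_Bcone_horizontal {a b : ℝ} (hab : a ^ 2 + b ^ 2 = 1) :
    gauge Bcone ![a, b, 0] = 1 := by
  simpa using gauge_Bcone_lateral hab zero_le_one le_rfl

theorem vT_two (i : Fin 3) : vT i 2 = 0 := by
  fin_cases i <;> simp [vT]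

theorem vT_sq_add_sq (i : Fin 3) : vT i 0 ^ 2 + vT i 1 ^ 2 = 1 := by
  fin_cases i <;> simp [vT] <;> norm_num [div_pow]

theorem vT_sub_sq_add_sq {i j : Fin 3} (hij : i ≠ j) :
    (vT i 0 - vT j 0) ^ 2 + (vT i 1 - vT j 1) ^ 2 = 3 := by
  fin_cases i <;> fin_cases j <;> simp_all [vT] <;> ring_nf <;> norm_num

theorem zero_sub_wT (i : Fin 3) :
    0 - wT i = ![1 / √3 * -vT i 0, 1 / √3 * -vT i 1, 1 / √3 - 1] := by
  ext k
  fin_cases k <;> simp [wT, vT_two, sub_div, -Matrix.add_cons, -Matrix.sub_cons]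

theorem wT_sub_wT (i j : Fin 3) :
    wT i - wT j = ![(vT i 0 - vT j 0) / √3, (vT i 1 - vT j 1) / √3, 0] := by
  ext k
  fin_cases k <;> simp [wT, vT_two, -Matrix.add_cons, -Matrix.sub_cons] <;> ring

/-- The equilateral dimension of the double-cone space is at least 4: the origin together
with the three vertices of `T⋆` are pairwise at gauge distance exactly 1. -/
theorem equilateral_dimension_cone_ge_four :
    (∀ i, gauge Bcone ((0 : Fin 3 → ℝ) - wT i) = 1) ∧
    (∀ i j, i ≠ j → gauge Bcone (wT i - wT j) = 1) := by
  have hsqrt : 1 ≤ √3 := Real.one_le_sqrt.2 (by norm_num)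
  refine ⟨fun i => ?_, fun i j hij => ?_⟩
  · rw [zero_sub_wT]
    exact gauge_Bcone_lateral (by simpa using vT_sq_add_sq i) (by positivity)
      (div_le_one_of_le₀ hsqrt (by positivity))
  · rw [wT_sub_wT]
    refine gauge_Bcone_horizontal ?_
    rw [div_pow, div_pow, ← add_div, vT_sub_sq_add_sq hij, Real.sq_sqrt (by norm_num),
      div_self three_ne_zero]
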